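/- Let κ > 0 and b > 0, and let E : ℝ → ℝ be twice differentiable on [0, b] with E″(T) ≥ κ²·E(T) for all T ∈ [0, b] and E′(b) + κ·E(b) ≤ 0. Then the function T ↦ e^{−κT}·(E′(T) + κE(T)) is monotone increasing on [0, b], hence E′(T) + κE(T) ≤ 0 on [0, b], the function T ↦ e^{κT}·E(T) is antitone on [0, b], and consequently E(T) ≤ e^{−κT}·E(0) for all T ∈ [0, b]. -/

import Mathlib

/-!
Since `(e^{cT} f)' = e^{cT}(f' + c f)`, the function `F = E' + κE` satisfies
`(e^{-κT} F)' = e^{-κT}(E'' - κ²E) ≥ 0`, so `e^{-κT} F` increases to its value at `b`, which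
is `≤ 0`. Hence `F ≤ 0`, that is `(e^{κT} E)' = e^{κT} F ≤ 0`.
-/

open Real Set

theorem HasDerivAt.exp_mul_mul {f : ℝ → ℝ} {f' x : ℝ} (c : ℝ) (hf : HasDerivAt f f' x) :
    HasDerivAt (fun t => Real.exp (c * t) * f t) (Real.exp (c * x) * (f' + c * f x)) x := by
  refine ((((hasDerivAt_id x).const_mul c).exp).mul hf).congr_deriv ?_
  simp only [id, mul_one]
  ring

section WeightedMonotone

variable {f f' : ℝ → ℝ} {s : Set ℝ} {c : ℝ}

theorem monotoneOn_exp_mul_mul (hs : Convex ℝ s) (hf : ∀ x ∈ s, HasDerivAt f (f' x) x)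
    (h : ∀ x ∈ s, 0 ≤ f' x + c * f x) : MonotoneOn (fun t => exp (c * t) * f t) s :=
  monotoneOn_of_hasDerivWithinAt_nonneg hs
    (fun x hx => (HasDerivAt.exp_mul_mul c (hf x hx)).continuousAt.continuousWithinAt)
    (fun x hx => (HasDerivAt.exp_mul_mul c (hf x (interior_subset hx))).hasDerivWithinAt)
    (fun x hx => mul_nonneg (exp_pos _).le (h x (interior_subset hx)))

theorem antitoneOn_exp_mul_mul (hs : Convex ℝ s) (hf : ∀ x ∈ s, HasDerivAt f (f' x) x)
    (h : ∀ x ∈ s, f' x + c * f x ≤ 0) : AntitoneOn (fun t => exp (c * t) * f t) s :=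
  antitoneOn_of_hasDerivWithinAt_nonpos hs
    (fun x hx => (HasDerivAt.exp_mul_mul c (hf x hx)).continuousAt.continuousWithinAt)
    (fun x hx => (HasDerivAt.exp_mul_mul c (hf x (interior_subset hx))).hasDerivWithinAt)
    (fun x hx => mul_nonpos_of_nonneg_of_nonpos (exp_pos _).le (h x (interior_subset hx)))

end WeightedMonotone

theorem stmt_5_general
    (κ b : ℝ) (E E' E'' : ℝ → ℝ)
    (hd1 : ∀ T ∈ Set.Icc 0 b, HasDerivAt E (E' T) T)
    (hd2 : ∀ T ∈ Set.Icc 0 b, HasDerivAt E' (E'' T) T)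
    (hconv : ∀ T ∈ Set.Icc 0 b, κ ^ 2 * E T ≤ E'' T)
    (hend : E' b + κ * E b ≤ 0) :
    MonotoneOn (fun T => Real.exp (-κ * T) * (E' T + κ * E T)) (Set.Icc 0 b) ∧
    (∀ T ∈ Set.Icc 0 b, E' T + κ * E T ≤ 0) ∧
    AntitoneOn (fun T => Real.exp (κ * T) * E T) (Set.Icc 0 b) ∧
    (∀ T ∈ Set.Icc 0 b, E T ≤ Real.exp (-κ * T) * E 0) := by
  have hF : ∀ T ∈ Icc 0 b, HasDerivAt (fun T => E' T + κ * E T) (E'' T + κ * E' T) T :=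
    fun T hT => (hd2 T hT).add ((hd1 T hT).const_mul κ)
  have hmono : MonotoneOn (fun T => exp (-κ * T) * (E' T + κ * E T)) (Icc 0 b) :=
    monotoneOn_exp_mul_mul (convex_Icc 0 b) hF fun T hT => by linear_combination hconv T hT
  have hnonpos : ∀ T ∈ Icc 0 b, E' T + κ * E T ≤ 0 := fun T hT =>
    nonpos_of_mul_nonpos_right
      ((hmono hT ⟨hT.1.trans hT.2, le_rfl⟩ hT.2).trans
        (mul_nonpos_of_nonneg_of_nonpos (exp_pos _).le hend))
      (exp_pos (-κ * T))
  have hanti : AntitoneOn (fun T => exp (κ * T) * E T) (Icc 0 b) :=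
    antitoneOn_exp_mul_mul (convex_Icc 0 b) hd1 hnonpos
  refine ⟨hmono, hnonpos, hanti, fun T hT => ?_⟩
  have hdecay : exp (κ * T) * E T ≤ E 0 := by
    simpa using hanti ⟨le_rfl, hT.1.trans hT.2⟩ hT hT.1
  calc E T = exp (-κ * T) * (exp (κ * T) * E T) := by
        rw [← mul_assoc, ← exp_add, neg_mul, neg_add_cancel, exp_zero, one_mul]
    _ ≤ exp (-κ * T) * E 0 := mul_le_mul_of_nonneg_left hdecay (exp_pos _).le

/-- Convexity on a finite interval: if `E'' ≥ κ²·E` on `[0, b]` and `E'(b) + κ·E(b) ≤ 0`,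
then `T ↦ e^{−κT}(E'(T) + κE(T))` is monotone on `[0, b]`, hence `E' + κE ≤ 0` there,
`T ↦ e^{κT}·E(T)` is antitone on `[0, b]`, and `E(T) ≤ e^{−κT}·E(0)` for `T ∈ [0, b]`. -/
theorem stmt_5
    (κ b : ℝ) (hκ : 0 < κ) (hb : 0 < b) (E E' E'' : ℝ → ℝ)
    (hd1 : ∀ T ∈ Set.Icc 0 b, HasDerivAt E (E' T) T)
    (hd2 : ∀ T ∈ Set.Icc 0 b, HasDerivAt E' (E'' T) T)
    (hconv : ∀ T ∈ Set.Icc 0 b, κ ^ 2 * E T ≤ E'' T)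
    (hend : E' b + κ * E b ≤ 0) :
    MonotoneOn (fun T => Real.exp (-κ * T) * (E' T + κ * E T)) (Set.Icc 0 b) ∧
    (∀ T ∈ Set.Icc 0 b, E' T + κ * E T ≤ 0) ∧
    AntitoneOn (fun T => Real.exp (κ * T) * E T) (Set.Icc 0 b) ∧
    (∀ T ∈ Set.Icc 0 b, E T ≤ Real.exp (-κ * T) * E 0) :=
  stmt_5_general κ b E E' E'' hd1 hd2 hconv hend
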